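/- Let H be a hyperbolic group with finite generating set A and word metric d_A, let K ≥ 0 be such that every triple of points of H admits a K-center, and let φ : H → H be an endomorphism. Then the BRP holds for φ (for every p ≥ 0 there exists q ≥ 0 such that for all u, v ∈ H, (u|v) ≤ p implies (φ(u)|φ(v)) ≤ q) if and only if φ is coarse-median preserving, i.e., there exists C ≥ 0 such that for all x, y, z ∈ H, every K-center m of (x, y, z) and every K-center m′ of (φ(x), φ(y), φ(z)) satisfy d_A(φ(m), m′) ≤ C. -/

import Mathlib

/-!
Everything is phrased through Gromov products. A `K`-center `m` of `(x, y, z)` has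
`(x|y)_m, (y|z)_m, (z|x)_m ≤ K`, and in a `δ`-hyperbolic group any two points at which these
three products are bounded are uniformly close: both lie near a geodesic `[x, y]`, at positions
determined up to a bounded error by `(y|z)_x`. Since `(u|v)_m = (m⁻¹u|m⁻¹v)`, the BRP with
`p = K` sends `K`-centers of `(x, y, z)` to points with bounded Gromov products for
`(φx, φy, φz)`, hence close to its `K`-centers.

Conversely, if `(u|v) ≤ p`, a `K`-center `m` of `(1, u, v)` lies within `p + 2K` of `1`, so
`φ m` lies within `L (p + 2K)` of `1`, where `L` bounds `|φ a|` on the generators. A `K`-center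
`m'` of `(1, φu, φv)` is within `C` of `φ m`, and `(φu|φv) ≤ (φu|φv)_{m'} + d(1, m') ≤ K + d(1, m')`.
-/

namespace Paper

variable {H : Type*} [Group H]

/-- `g` can be written as a product of `n` elements of `A ∪ A⁻¹`. -/
def WordWitness (A : Set H) (g : H) (n : ℕ) : Prop :=
  ∃ l : List H, l.length = n ∧ (∀ x ∈ l, x ∈ A ∨ x⁻¹ ∈ A) ∧ l.prod = g

/-- The word metric on `H` with respect to the generating set `A`. -/
noncomputable def wd (A : Set H) (g h : H) : ℕ :=
  sInf {n | WordWitness A (g⁻¹ * h) n}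

/-- The Gromov product `(u|v)_w` with respect to the word metric for `A`. -/
noncomputable def gp (A : Set H) (w u v : H) : ℝ :=
  ((wd A w u : ℝ) + (wd A w v : ℝ) - (wd A u v : ℝ)) / 2

/-- A discrete geodesic `γ : {0,…,n} → H` from `x` to `y` for the word metric of `A`. -/
def IsDiscreteGeodesic (A : Set H) (n : ℕ) (γ : ℕ → H) (x y : H) : Prop :=
  γ 0 = x ∧ γ n = y ∧
    ∀ i, i ≤ n → ∀ j, j ≤ n → (wd A (γ i) (γ j) : ℤ) = |(i : ℤ) - (j : ℤ)|

/-- `H` is hyperbolic with respect to `A`: some `δ ≥ 0` satisfies the Rips thin-triangles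
condition for discrete geodesics (all three sides are covered since `x, y, z` and the three
geodesics are universally quantified, and hence may be cyclically permuted). -/
def IsHyperbolic (A : Set H) : Prop :=
  ∃ δ : ℝ, 0 ≤ δ ∧ ∀ x y z : H, ∀ n₁ n₂ n₃ : ℕ, ∀ α β γ : ℕ → H,
    IsDiscreteGeodesic A n₁ α x y → IsDiscreteGeodesic A n₂ β y z →
    IsDiscreteGeodesic A n₃ γ z x → ∀ i, i ≤ n₁ →
      ∃ j, (j ≤ n₂ ∧ (wd A (α i) (β j) : ℝ) ≤ δ) ∨
           (j ≤ n₃ ∧ (wd A (α i) (γ j) : ℝ) ≤ δ)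

/-- The bounded reduction property for `φ`, in its Gromov-product formulation:
for every `p ≥ 0` there is `q ≥ 0` such that `(u|v) ≤ p` implies `(φ(u)|φ(v)) ≤ q`. -/
def BRP (A : Set H) (φ : H →* H) : Prop :=
  ∀ p : ℝ, 0 ≤ p → ∃ q : ℝ, 0 ≤ q ∧
    ∀ u v : H, gp A 1 u v ≤ p → gp A 1 (φ u) (φ v) ≤ q

/-- `m` is a `K`-center of the triple `(x,y,z)`: it lies within distance `K` of (the image of)
every discrete geodesic joining any two of the three points. -/
def IsKCenter (A : Set H) (K : ℝ) (x y z m : H) : Prop :=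
  (∀ n : ℕ, ∀ γ : ℕ → H, IsDiscreteGeodesic A n γ x y →
    ∃ i, i ≤ n ∧ (wd A m (γ i) : ℝ) ≤ K) ∧
  (∀ n : ℕ, ∀ γ : ℕ → H, IsDiscreteGeodesic A n γ y z →
    ∃ i, i ≤ n ∧ (wd A m (γ i) : ℝ) ≤ K) ∧
  (∀ n : ℕ, ∀ γ : ℕ → H, IsDiscreteGeodesic A n γ z x →
    ∃ i, i ≤ n ∧ (wd A m (γ i) : ℝ) ≤ K)

section WordMetric

variable {A : Set H}

lemma wordWitness_one : WordWitness A 1 0 := ⟨[], rfl, by simp, rfl⟩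

lemma WordWitness.mul {g h : H} {m n : ℕ} (hg : WordWitness A g m) (hh : WordWitness A h n) :
    WordWitness A (g * h) (m + n) := by
  obtain ⟨l, rfl, hl, rfl⟩ := hg
  obtain ⟨l', rfl, hl', rfl⟩ := hh
  refine ⟨l ++ l', List.length_append, fun x hx => ?_, List.prod_append⟩
  exact (List.mem_append.1 hx).elim (hl x) (hl' x)

lemma WordWitness.inv {g : H} {n : ℕ} (hg : WordWitness A g n) : WordWitness A g⁻¹ n := by
  obtain ⟨l, rfl, hl, rfl⟩ := hg
  refine ⟨(l.map (·⁻¹)).reverse, by simp, fun x hx => ?_, (List.prod_inv_reverse l).symm⟩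
  obtain ⟨y, hy, rfl⟩ := List.mem_map.1 (List.mem_reverse.1 hx)
  simpa [or_comm] using hl y hy

lemma exists_wordWitness (hgen : Subgroup.closure A = ⊤) (g : H) : ∃ n, WordWitness A g n := by
  induction (hgen ▸ Subgroup.mem_top g : g ∈ Subgroup.closure A)
    using Subgroup.closure_induction with
  | mem x hx => exact ⟨1, [x], rfl, by simpa using Or.inl hx, by simp⟩
  | one => exact ⟨0, wordWitness_one⟩
  | mul x y _ _ hx hy =>
    obtain ⟨m, hx⟩ := hx
    obtain ⟨n, hy⟩ := hy
    exact ⟨m + n, hx.mul hy⟩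
  | inv x _ hx =>
    obtain ⟨n, hx⟩ := hx
    exact ⟨n, hx.inv⟩

lemma wd_le_of_wordWitness {g h : H} {n : ℕ} (hw : WordWitness A (g⁻¹ * h) n) : wd A g h ≤ n :=
  Nat.sInf_le hw

-- Without `hgen` the infimum defining `wd` may be over the empty set, with junk value `0`.
lemma wordWitness_wd (hgen : Subgroup.closure A = ⊤) (g h : H) :
    WordWitness A (g⁻¹ * h) (wd A g h) :=
  Nat.sInf_mem (exists_wordWitness hgen _)

lemma wd_eq_wd_one (g h : H) : wd A g h = wd A 1 (g⁻¹ * h) := by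
  simp only [wd, inv_one, one_mul]

lemma wd_self (g : H) : wd A g g = 0 :=
  Nat.le_zero.1 (wd_le_of_wordWitness (by simpa using wordWitness_one))

lemma wd_comm (g h : H) : wd A g h = wd A h g := by
  unfold wd
  congr 1
  ext n
  constructor <;> intro hw <;> simpa using hw.inv

lemma wd_mul_left (g h k : H) : wd A (g * h) (g * k) = wd A h k := by
  simp only [wd, mul_inv_rev, mul_assoc, inv_mul_cancel_left]

lemma wd_one_inv (g : H) : wd A 1 g⁻¹ = wd A 1 g := by
  rw [← wd_mul_left g, mul_one, mul_inv_cancel, wd_comm]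

lemma wd_triangle (hgen : Subgroup.closure A = ⊤) (g h k : H) :
    wd A g k ≤ wd A g h + wd A h k :=
  wd_le_of_wordWitness <| by
    simpa [mul_assoc] using (wordWitness_wd hgen g h).mul (wordWitness_wd hgen h k)

lemma wd_triangle_real (hgen : Subgroup.closure A = ⊤) (g h k : H) :
    (wd A g k : ℝ) ≤ wd A g h + wd A h k := by
  exact_mod_cast wd_triangle hgen g h k

lemma wd_one_mul_le (hgen : Subgroup.closure A = ⊤) (g h : H) :
    wd A 1 (g * h) ≤ wd A 1 g + wd A 1 h := by
  simpa [wd_eq_wd_one g] using wd_triangle hgen 1 g (g * h)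

end WordMetric

section Lipschitz

variable {G : Type*} [Group G] {A : Set G} {B : Set H}

lemma wd_one_map_le_of_wordWitness (hgen : Subgroup.closure B = ⊤) (φ : G →* H) {L : ℕ}
    (hL : ∀ a, a ∈ A ∨ a⁻¹ ∈ A → wd B 1 (φ a) ≤ L) {g : G} {n : ℕ} (hg : WordWitness A g n) :
    wd B 1 (φ g) ≤ L * n := by
  obtain ⟨l, rfl, hl, rfl⟩ := hg
  induction l with
  | nil => simp [wd_self]
  | cons a l ih =>
    calc wd B 1 (φ (a :: l).prod) ≤ wd B 1 (φ a) + wd B 1 (φ l.prod) := by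
          rw [List.prod_cons, map_mul]
          exact wd_one_mul_le hgen _ _
      _ ≤ L + L * l.length :=
          add_le_add (hL a (hl a List.mem_cons_self))
            (ih fun x hx => hl x (List.mem_cons_of_mem a hx))
      _ = L * (a :: l).length := by simp only [List.length_cons]; ring

lemma exists_wd_map_le (hA : A.Finite) (hgenA : Subgroup.closure A = ⊤)
    (hgenB : Subgroup.closure B = ⊤) (φ : G →* H) :
    ∃ L : ℕ, ∀ g h, wd B (φ g) (φ h) ≤ L * wd A g h := by
  obtain ⟨L, hL⟩ := (hA.image fun a => wd B 1 (φ a)).bddAbove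
  have hbound : ∀ a, a ∈ A ∨ a⁻¹ ∈ A → wd B 1 (φ a) ≤ L := by
    rintro a (ha | ha)
    · exact hL ⟨a, ha, rfl⟩
    · simpa [wd_one_inv] using hL ⟨a⁻¹, ha, rfl⟩
  refine ⟨L, fun g h => ?_⟩
  rw [wd_eq_wd_one, ← map_inv, ← map_mul]
  exact wd_one_map_le_of_wordWitness hgenB φ hbound (wordWitness_wd hgenA g h)

end Lipschitz

section Geodesics

variable {A : Set H}

lemma isDiscreteGeodesic_of_wd_le (hgen : Subgroup.closure A = ⊤) {γ : ℕ → H} {n : ℕ}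
    (hle : ∀ i j, i ≤ j → wd A (γ i) (γ j) ≤ j - i) (hn : n ≤ wd A (γ 0) (γ n)) :
    IsDiscreteGeodesic A n γ (γ 0) (γ n) := by
  have heq : ∀ i j, i ≤ j → j ≤ n → wd A (γ i) (γ j) = j - i := by
    intro i j hij hjn
    have := wd_triangle hgen (γ 0) (γ i) (γ j)
    have := wd_triangle hgen (γ 0) (γ j) (γ n)
    have := hle 0 i; have := hle i j; have := hle j n
    omega
  refine ⟨rfl, rfl, fun i hi j hj => ?_⟩
  rcases le_total i j with hij | hij
  · rw [heq i j hij hj, abs_of_nonpos (by omega)]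
    omega
  · rw [wd_comm, heq j i hij hi, abs_of_nonneg (by omega)]
    omega

lemma exists_geodesic (hgen : Subgroup.closure A = ⊤) (g h : H) :
    ∃ γ : ℕ → H, IsDiscreteGeodesic A (wd A g h) γ g h := by
  obtain ⟨l, hl, hlA, hprod⟩ := wordWitness_wd hgen g h
  set γ : ℕ → H := fun i => g * (l.take i).prod
  have hγ0 : γ 0 = g := by simp [γ]
  have hγn : γ (wd A g h) = h := by simp [γ, ← hl, hprod]
  have hle : ∀ i j, i ≤ j → wd A (γ i) (γ j) ≤ j - i := by
    intro i j hij
    refine (wd_le_of_wordWitness ⟨(l.drop i).take (j - i), rfl, ?_, ?_⟩).trans ?_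
    · exact fun x hx => hlA x (List.mem_of_mem_drop (List.mem_of_mem_take hx))
    · rw [← Nat.add_sub_cancel' hij]
      simp [γ, List.take_add, mul_assoc]
    · simp
  have hγ := isDiscreteGeodesic_of_wd_le (n := wd A g h) hgen hle (by rw [hγ0, hγn])
  rw [hγ0, hγn] at hγ
  exact ⟨γ, hγ⟩

namespace IsDiscreteGeodesic

variable {n : ℕ} {γ : ℕ → H} {x y : H}

lemma wd_eq_abs (hγ : IsDiscreteGeodesic A n γ x y) {i j : ℕ} (hi : i ≤ n) (hj : j ≤ n) :
    (wd A (γ i) (γ j) : ℝ) = |(i : ℝ) - j| := by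
  exact_mod_cast hγ.2.2 i hi j hj

lemma wd_eq (hγ : IsDiscreteGeodesic A n γ x y) {i j : ℕ} (hij : i ≤ j) (hj : j ≤ n) :
    (wd A (γ i) (γ j) : ℝ) = j - i := by
  rw [hγ.wd_eq_abs (hij.trans hj) hj, abs_sub_comm, abs_of_nonneg (by simpa using hij)]

lemma wd_start (hγ : IsDiscreteGeodesic A n γ x y) {i : ℕ} (hi : i ≤ n) :
    (wd A x (γ i) : ℝ) = i := by
  simpa [hγ.1] using hγ.wd_eq (Nat.zero_le i) hi

lemma wd_end (hγ : IsDiscreteGeodesic A n γ x y) {i : ℕ} (hi : i ≤ n) :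
    (wd A (γ i) y : ℝ) = n - i := by
  simpa [hγ.2.1] using hγ.wd_eq hi le_rfl

lemma wd_eq_length (hγ : IsDiscreteGeodesic A n γ x y) : (wd A x y : ℝ) = n := by
  simpa [hγ.2.1] using hγ.wd_start le_rfl

lemma gp_le_wd (hgen : Subgroup.closure A = ⊤) (hγ : IsDiscreteGeodesic A n γ x y) {i : ℕ}
    (hi : i ≤ n) (m : H) : gp A m x y ≤ wd A m (γ i) := by
  have hx := wd_triangle_real hgen m (γ i) x
  have hy := wd_triangle_real hgen m (γ i) y
  rw [wd_comm (γ i) x, hγ.wd_start hi] at hx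
  rw [hγ.wd_end hi] at hy
  rw [gp, hγ.wd_eq_length]
  linarith

lemma abs_wd_sub_le (hgen : Subgroup.closure A = ⊤) (hγ : IsDiscreteGeodesic A n γ x y) {i : ℕ}
    (hi : i ≤ n) (a : H) : |(wd A a x : ℝ) - i| ≤ wd A a (γ i) := by
  have h₁ := wd_triangle_real hgen a (γ i) x
  have h₂ := wd_triangle_real hgen x a (γ i)
  rw [wd_comm (γ i) x, hγ.wd_start hi] at h₁
  rw [wd_comm x a, hγ.wd_start hi] at h₂
  rw [abs_le]
  constructor <;> linarith

end IsDiscreteGeodesic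

end Geodesics

section GromovProduct

variable {A : Set H}

lemma gp_nonneg (hgen : Subgroup.closure A = ⊤) (w u v : H) : 0 ≤ gp A w u v := by
  have := wd_triangle_real hgen u w v
  rw [wd_comm u w] at this
  rw [gp]
  linarith

lemma gp_eq_gp_one (w u v : H) : gp A w u v = gp A 1 (w⁻¹ * u) (w⁻¹ * v) := by
  rw [gp, gp, wd_eq_wd_one w u, wd_eq_wd_one w v, ← wd_mul_left w⁻¹ u v]

lemma gp_le_gp_add_wd (hgen : Subgroup.closure A = ⊤) (a b u v : H) :
    gp A a u v ≤ gp A b u v + wd A a b := by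
  have hu := wd_triangle_real hgen a b u
  have hv := wd_triangle_real hgen a b v
  rw [gp, gp]
  linarith

lemma gp_map_le {G : Type*} [Group G] {B : Set G} (φ : H →* G) {r s : ℝ}
    (hφ : ∀ u v, gp A 1 u v ≤ r → gp B 1 (φ u) (φ v) ≤ s) {w u v : H} (h : gp A w u v ≤ r) :
    gp B (φ w) (φ u) (φ v) ≤ s := by
  rw [gp_eq_gp_one, ← map_inv, ← map_mul, ← map_mul]
  exact hφ _ _ (gp_eq_gp_one (A := A) w u v ▸ h)

end GromovProduct

def ThinTriangles (A : Set H) (δ : ℝ) : Prop :=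
  ∀ x y z : H, ∀ n₁ n₂ n₃ : ℕ, ∀ α β γ : ℕ → H,
    IsDiscreteGeodesic A n₁ α x y → IsDiscreteGeodesic A n₂ β y z →
    IsDiscreteGeodesic A n₃ γ z x → ∀ i, i ≤ n₁ →
      ∃ j, (j ≤ n₂ ∧ (wd A (α i) (β j) : ℝ) ≤ δ) ∨
           (j ≤ n₃ ∧ (wd A (α i) (γ j) : ℝ) ≤ δ)

lemma exists_switch_of_forall_or {P Q : ℕ → Prop} {n : ℕ} (h0 : P 0)
    (h : ∀ i ≤ n, P i ∨ Q i) : P n ∨ ∃ i < n, P i ∧ Q (i + 1) := by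
  induction n with
  | zero => exact Or.inl h0
  | succ n ih =>
    rcases ih fun i hi => h i (hi.trans n.le_succ) with hn | ⟨i, hi, hPQ⟩
    · exact (h (n + 1) le_rfl).imp_right fun hQ => ⟨n, n.lt_succ_self, hn, hQ⟩
    · exact Or.inr ⟨i, hi.trans n.lt_succ_self, hPQ⟩

lemma ThinTriangles.exists_wd_le_gp {A : Set H} {δ : ℝ} (hthin : ThinTriangles A δ)
    (hgen : Subgroup.closure A = ⊤) (hδ : 0 ≤ δ) (a : H) {x y : H} {n : ℕ} {γ : ℕ → H}
    (hγ : IsDiscreteGeodesic A n γ x y) :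
    ∃ i ≤ n, (wd A a (γ i) : ℝ) ≤ gp A a x y + 2 * δ + 1 := by
  obtain ⟨β, hβ⟩ := exists_geodesic hgen y a
  obtain ⟨β', hβ'⟩ := exists_geodesic hgen a x
  have h0 : ∃ j ≤ wd A a x, (wd A (γ 0) (β' j) : ℝ) ≤ δ :=
    ⟨_, le_rfl, by rw [hγ.1, hβ'.2.1, wd_self]; exact_mod_cast hδ⟩
  have hsides : ∀ i ≤ n, (∃ j ≤ wd A a x, (wd A (γ i) (β' j) : ℝ) ≤ δ) ∨
      ∃ j ≤ wd A y a, (wd A (γ i) (β j) : ℝ) ≤ δ := fun i hi => by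
    obtain ⟨j, hj | hj⟩ := hthin x y a _ _ _ γ β β' hγ hβ hβ' i hi
    exacts [Or.inr ⟨j, hj⟩, Or.inl ⟨j, hj⟩]
  have hxy := hγ.wd_eq_length
  -- Walking along `γ` from `x`, some `γ i` is still near the side `[a, x]` while `γ (i + 1)` is
  -- near `[y, a]` (or `y` itself is near `[a, x]`); both are then almost on geodesics through `a`.
  rcases exists_switch_of_forall_or h0 hsides with ⟨j, hj, hyj⟩ | ⟨i, hi, ⟨j, hj, hij⟩, ⟨k, hk, hik⟩⟩
  · refine ⟨n, le_rfl, ?_⟩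
    have hy := (hβ'.gp_le_wd hgen hj (γ n)).trans hyj
    rw [hγ.2.1] at hy ⊢
    rw [gp] at hy ⊢
    rw [wd_comm y a, wd_comm y x] at hy
    linarith
  · refine ⟨i, hi.le, ?_⟩
    have hpx := (hβ'.gp_le_wd hgen hj (γ i)).trans hij
    have hpy := (hβ.gp_le_wd hgen hk (γ (i + 1))).trans hik
    have hstep : (wd A (γ (i + 1)) (γ i) : ℝ) = 1 := by
      rw [wd_comm, hγ.wd_eq i.le_succ hi]; push_cast; ring
    have htri := wd_triangle_real hgen a (γ (i + 1)) (γ i)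
    have hxi := hγ.wd_start hi.le
    have hiy := hγ.wd_end (i := i + 1) hi
    rw [gp, wd_comm (γ i) a, wd_comm (γ i) x] at hpx
    rw [gp, wd_comm (γ (i + 1)) a, wd_comm y a] at hpy
    rw [gp]
    push_cast at hiy
    linarith

section QuasiCenter

variable {A : Set H}

def IsQuasiCenter (A : Set H) (r : ℝ) (x y z m : H) : Prop :=
  gp A m x y ≤ r ∧ gp A m y z ≤ r ∧ gp A m z x ≤ r

lemma gp_le_of_forall_geodesic (hgen : Subgroup.closure A = ⊤) {K : ℝ} {x y m : H}
    (h : ∀ n : ℕ, ∀ γ : ℕ → H, IsDiscreteGeodesic A n γ x y →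
      ∃ i, i ≤ n ∧ (wd A m (γ i) : ℝ) ≤ K) :
    gp A m x y ≤ K := by
  obtain ⟨γ, hγ⟩ := exists_geodesic hgen x y
  obtain ⟨i, hi, hm⟩ := h _ γ hγ
  exact (hγ.gp_le_wd hgen hi m).trans hm

lemma IsKCenter.isQuasiCenter (hgen : Subgroup.closure A = ⊤) {K : ℝ} {x y z m : H}
    (hm : IsKCenter A K x y z m) : IsQuasiCenter A K x y z m :=
  ⟨gp_le_of_forall_geodesic hgen hm.1, gp_le_of_forall_geodesic hgen hm.2.1,
    gp_le_of_forall_geodesic hgen hm.2.2⟩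

lemma IsQuasiCenter.map {G : Type*} [Group G] {B : Set G} (φ : H →* G) {r s : ℝ}
    (hφ : ∀ u v, gp A 1 u v ≤ r → gp B 1 (φ u) (φ v) ≤ s) {x y z m : H}
    (hm : IsQuasiCenter A r x y z m) : IsQuasiCenter B s (φ x) (φ y) (φ z) (φ m) :=
  ⟨gp_map_le φ hφ hm.1, gp_map_le φ hφ hm.2.1, gp_map_le φ hφ hm.2.2⟩

lemma IsQuasiCenter.abs_wd_sub_gp_le (hgen : Subgroup.closure A = ⊤) {r : ℝ} {x y z m : H}
    (hm : IsQuasiCenter A r x y z m) : |(wd A m x : ℝ) - gp A x y z| ≤ 2 * r := by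
  obtain ⟨hxy, hyz, hzx⟩ := hm
  have := gp_nonneg hgen m x y
  have := gp_nonneg hgen m y z
  have := gp_nonneg hgen m z x
  simp only [gp, wd_comm z x] at *
  rw [abs_le]
  constructor <;> linarith

lemma IsQuasiCenter.wd_le (hgen : Subgroup.closure A = ⊤) {δ : ℝ} (hthin : ThinTriangles A δ)
    (hδ : 0 ≤ δ) {r s : ℝ} {x y z a b : H} (ha : IsQuasiCenter A r x y z a)
    (hb : IsQuasiCenter A s x y z b) : (wd A a b : ℝ) ≤ 4 * r + 4 * s + 8 * δ + 4 := by
  obtain ⟨γ, hγ⟩ := exists_geodesic hgen x y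
  obtain ⟨i, hi, hai⟩ := hthin.exists_wd_le_gp hgen hδ a hγ
  obtain ⟨j, hj, hbj⟩ := hthin.exists_wd_le_gp hgen hδ b hγ
  have hai' := abs_le.1 (hγ.abs_wd_sub_le hgen hi a)
  have hbj' := abs_le.1 (hγ.abs_wd_sub_le hgen hj b)
  have hax := abs_le.1 (ha.abs_wd_sub_gp_le hgen)
  have hbx := abs_le.1 (hb.abs_wd_sub_gp_le hgen)
  have hab := (wd_triangle_real hgen a (γ i) b).trans
    (add_le_add_right (wd_triangle_real hgen (γ i) (γ j) b) _)
  rw [hγ.wd_eq_abs hi hj, wd_comm (γ j) b] at hab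
  have := ha.1
  have := hb.1
  cases abs_cases ((i : ℝ) - j) <;> linarith

end QuasiCenter

/-- The BRP holds for `φ` if and only if `φ` is coarse-median preserving, where the
coarse median of a hyperbolic group is given by `K`-centers of triples. -/
theorem brp_iff_coarseMedianPreserving
    (A : Set H) (hA : A.Finite) (hgen : Subgroup.closure A = ⊤)
    (hhyp : IsHyperbolic A) (K : ℝ) (hK : 0 ≤ K)
    (hcenter : ∀ x y z : H, ∃ m : H, IsKCenter A K x y z m)
    (φ : H →* H) :
    BRP A φ ↔
      ∃ C : ℝ, 0 ≤ C ∧ ∀ x y z m m' : H,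
        IsKCenter A K x y z m → IsKCenter A K (φ x) (φ y) (φ z) m' →
        (wd A (φ m) m' : ℝ) ≤ C := by
  obtain ⟨δ, hδ, hthin⟩ := hhyp
  constructor
  · intro hbrp
    obtain ⟨q, hq, hφ⟩ := hbrp K hK
    refine ⟨4 * q + 4 * K + 8 * δ + 4, by positivity, fun x y z m m' hm hm' => ?_⟩
    exact ((hm.isQuasiCenter hgen).map φ hφ).wd_le hgen hthin hδ (hm'.isQuasiCenter hgen)
  · rintro ⟨C, hC, hcmp⟩ p hp
    obtain ⟨L, hL⟩ := exists_wd_map_le hA hgen hgen φ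
    refine ⟨L * (p + 2 * K) + C + K, by positivity, fun u v huv => ?_⟩
    obtain ⟨m, hm⟩ := hcenter 1 u v
    obtain ⟨m', hm'⟩ := hcenter 1 (φ u) (φ v)
    have hm1 : (wd A 1 m : ℝ) ≤ p + 2 * K := by
      have := abs_le.1 ((hm.isQuasiCenter hgen).abs_wd_sub_gp_le hgen)
      rw [wd_comm]
      linarith
    have hφm : (wd A 1 (φ m) : ℝ) ≤ L * (p + 2 * K) := by
      have := hL 1 m
      rw [map_one] at this
      calc (wd A 1 (φ m) : ℝ) ≤ L * wd A 1 m := by exact_mod_cast this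
        _ ≤ L * (p + 2 * K) := by gcongr
    have hmm' := hcmp 1 u v m m' hm (by rwa [map_one])
    calc gp A 1 (φ u) (φ v) ≤ gp A m' (φ u) (φ v) + wd A 1 m' := gp_le_gp_add_wd hgen _ _ _ _
      _ ≤ K + (wd A 1 (φ m) + wd A (φ m) m') :=
          add_le_add ((hm'.isQuasiCenter hgen).2.1) (wd_triangle_real hgen _ _ _)
      _ ≤ L * (p + 2 * K) + C + K := by linarith

end Paper
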